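/- For a single sample step in Lemma 1: if V is a random variable on a finite set 𝒱 with H(V) ≥ λ, and A ⊆ 𝒱 is a fixed set with |A| = i, then Pr[V ∉ A] ≥ (λ − 1 − log₂ i)/log₂ |𝒱|. -/

import Mathlib

open Finset Real

/-! Split the entropy of `V` according to whether `V ∈ A`. By concavity of `negMulLog`, the
part carried by a set `S` of mass `s` is at most `negMulLog s + s log |S|`. The two masses `s` and
`1 - s` contribute a binary entropy, at most one bit; the part on `A` adds at most `log₂ i`, and
the part on `Aᶜ` at most `Pr[V ∉ A] · log₂ |𝒱|`. -/

lemma log_natCast_le_log_natCast {m n : ℕ} (h : m ≤ n) : log m ≤ log n := by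
  rcases m.eq_zero_or_pos with rfl | hm
  · simpa using log_natCast_nonneg n
  · exact log_le_log (by exact_mod_cast hm) (by exact_mod_cast h)

lemma sum_negMulLog_le_negMulLog_sum_add_mul_log_card {ι : Type*} (S : Finset ι) (p : ι → ℝ)
    (hp : ∀ v ∈ S, 0 ≤ p v) :
    ∑ v ∈ S, negMulLog (p v) ≤ negMulLog (∑ v ∈ S, p v) + (∑ v ∈ S, p v) * log #S := by
  rcases S.eq_empty_or_nonempty with rfl | hS
  · simp
  have hn : (0 : ℝ) < #S := by exact_mod_cast hS.card_pos
  have jensen : ∑ v ∈ S, (#S : ℝ)⁻¹ * negMulLog (p v) ≤ negMulLog (∑ v ∈ S, (#S : ℝ)⁻¹ * p v) :=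
    concaveOn_negMulLog.le_map_sum (fun _ _ => by positivity)
      (by simp [mul_inv_cancel₀ hn.ne']) (fun v hv => Set.mem_Ici.mpr (hp v hv))
  -- `negMulLog (s / n) = (negMulLog s + s log n) / n`
  rw [← mul_sum, ← mul_sum, negMulLog_mul, negMulLog, log_inv] at jensen
  have := mul_le_mul_of_nonneg_left jensen hn.le
  field_simp at this
  linarith

lemma sum_negMulLog_le_log_two_add_log_card_add_mul_log_card {V : Type*} [Fintype V]
    [DecidableEq V] (p : V → ℝ) (hp0 : ∀ v, 0 ≤ p v) (hp1 : ∑ v, p v = 1) (A : Finset V) :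
    ∑ v, negMulLog (p v) ≤ log 2 + log #A + (∑ v ∈ Aᶜ, p v) * log (Fintype.card V) := by
  set s := ∑ v ∈ A, p v
  set q := ∑ v ∈ Aᶜ, p v
  have hq : q = 1 - s := by rw [← hp1, ← sum_add_sum_compl A]; ring
  have hq0 : 0 ≤ q := sum_nonneg fun v _ => hp0 v
  have on_A := sum_negMulLog_le_negMulLog_sum_add_mul_log_card A p fun v _ => hp0 v
  have on_Ac : ∑ v ∈ Aᶜ, negMulLog (p v) ≤ negMulLog q + q * log (Fintype.card V) := by
    refine (sum_negMulLog_le_negMulLog_sum_add_mul_log_card Aᶜ p fun v _ => hp0 v).trans ?_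
    gcongr _ + _ * ?_
    exact log_natCast_le_log_natCast (card_le_univ Aᶜ)
  have two_masses : negMulLog s + negMulLog q ≤ log 2 := by
    rw [hq, ← binEntropy_eq_negMulLog_add_negMulLog_one_sub]
    exact binEntropy_le_log_two
  have weighted_log : s * log #A ≤ log #A :=
    mul_le_of_le_one_left (log_natCast_nonneg _) (by linarith)
  rw [← sum_add_sum_compl A]
  linarith

lemma sum_neg_mul_logb_eq_sum_negMulLog_div {ι : Type*} (S : Finset ι) (b : ℝ) (p : ι → ℝ) :
    ∑ v ∈ S, -(p v * logb b (p v)) = (∑ v ∈ S, negMulLog (p v)) / log b := by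
  rw [sum_div]
  refine sum_congr rfl fun v _ => ?_
  rw [logb, negMulLog]
  ring

theorem single_sample_step_general {V : Type*} [Fintype V] [DecidableEq V]
    (p : V → ℝ) (hp0 : ∀ v, 0 ≤ p v) (hp1 : ∑ v, p v = 1)
    (lam : ℝ) (hH : lam ≤ ∑ v, -(p v * Real.logb 2 (p v)))
    (A : Finset V) (i : ℕ) (hA : A.card = i) :
    (lam - 1 - Real.logb 2 i) / Real.logb 2 (Fintype.card V)
      ≤ ∑ v ∈ Aᶜ, p v := by
  have hlog2 : 0 < log 2 := log_pos one_lt_two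
  have entropy_bits : lam ≤ 1 + logb 2 i + (∑ v ∈ Aᶜ, p v) * logb 2 (Fintype.card V) := by
    rw [sum_neg_mul_logb_eq_sum_negMulLog_div, le_div_iff₀ hlog2] at hH
    have entropy_nats := hH.trans
      (sum_negMulLog_le_log_two_add_log_card_add_mul_log_card p hp0 hp1 A)
    rw [hA] at entropy_nats
    calc lam = lam * log 2 / log 2 := by field_simp
      _ ≤ (log 2 + log i + (∑ v ∈ Aᶜ, p v) * log (Fintype.card V)) / log 2 := by gcongr
      _ = _ := by simp only [logb]; field_simp
  rcases (show 0 ≤ logb 2 (Fintype.card V) from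
      div_nonneg (log_natCast_nonneg _) hlog2.le).eq_or_lt with hL | hL
  · -- `|𝒱| ≤ 1`: the left side is a division by zero
    rw [← hL, div_zero]
    exact sum_nonneg fun v _ => hp0 v
  · rw [div_le_iff₀ hL]
    linarith

/-- single sampling step of Lemma 1: if `H(V) ≥ lam` and `A ⊆ 𝒱` with
`|A| = i ≥ 1`, then `Pr[V ∉ A] ≥ (lam - 1 - log₂ i)/log₂ |𝒱|`. -/
theorem single_sample_step {V : Type*} [Fintype V] [DecidableEq V]
    (p : V → ℝ) (hp0 : ∀ v, 0 ≤ p v) (hp1 : ∑ v, p v = 1)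
    (lam : ℝ) (hH : lam ≤ ∑ v, -(p v * Real.logb 2 (p v)))
    (A : Finset V) (i : ℕ) (hA : A.card = i) (hi : 1 ≤ i) :
    (lam - 1 - Real.logb 2 i) / Real.logb 2 (Fintype.card V)
      ≤ ∑ v ∈ Aᶜ, p v :=
  single_sample_step_general p hp0 hp1 lam hH A i hA
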